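/- arXiv:2605.07628 — 10 statements merged into one kernel-verified Lean document; each statement's English description precedes it below -/
import Mathlib

section
/- For fixed a ∈ (0,1), the function t ↦ (1 - √(1 - a t)) / (1 - √(1 - t)) is (strictly) decreasing on (0,1]. -/
/-!
Write `u = √(1 - t)` and `v = √(1 - a t)`, so `0 ≤ u < v < 1`. By the quotient rule the derivative
of the ratio has the sign of `a u (1 - u) - v (1 - v)`. Since `1 - u = t / (1 + u)` and
`1 - v = a t / (1 + v)`, this is `a t (u / (1 + u) - v / (1 + v)) < 0`, because `x ↦ x / (1 + x)`
is increasing.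
-/

open Real Set

lemma hasDerivAt_one_sub_sqrt_one_sub_mul {b t : ℝ} (h : 0 < 1 - b * t) :
    HasDerivAt (fun s => 1 - √(1 - b * s)) (b / (2 * √(1 - b * t))) t := by
  have hlin : HasDerivAt (fun s : ℝ => 1 - b * s) (-b) t := by
    simpa using ((hasDerivAt_id t).const_mul b).const_sub 1
  exact (((hasDerivAt_sqrt h.ne').comp t hlin).const_sub 1).congr_deriv (by ring)

lemma one_sub_sqrt_one_sub_pos {t : ℝ} (ht : 0 < t) : 0 < 1 - √(1 - t) := by
  have : √(1 - t) < 1 := (sqrt_lt' one_pos).2 (by linarith)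
  linarith

lemma mul_one_sub_lt_mul_one_sub {a t u v : ℝ} (ha : 0 < a) (ht : 0 < t) (hu : 0 ≤ u)
    (huv : u < v) (hu2 : u ^ 2 = 1 - t) (hv2 : v ^ 2 = 1 - a * t) :
    a * u * (1 - u) < v * (1 - v) := by
  have hpos : 0 < (1 + u) * (1 + v) := by nlinarith
  have key : a * u * (1 - u) * ((1 + u) * (1 + v)) < v * (1 - v) * ((1 + u) * (1 + v)) := by
    have hlt : a * t * u < a * t * v := mul_lt_mul_of_pos_left huv (mul_pos ha ht)
    linear_combination hlt - a * u * (1 + v) * hu2 + v * (1 + u) * hv2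
  exact lt_of_mul_lt_mul_right key hpos.le

theorem stmt_0 (a : ℝ) (ha : 0 < a) (ha1 : a < 1) :
    StrictAntiOn (fun t : ℝ => (1 - Real.sqrt (1 - a * t)) / (1 - Real.sqrt (1 - t)))
      (Set.Ioc 0 1) := by
  apply strictAntiOn_of_deriv_neg (convex_Ioc 0 1)
  · refine ContinuousOn.div (by fun_prop) (by fun_prop) fun t ht => ?_
    exact (one_sub_sqrt_one_sub_pos ht.1).ne'
  · intro t ht
    rw [interior_Ioc] at ht
    obtain ⟨ht0, ht1⟩ := ht
    have h1t : 0 < 1 - t := by linarith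
    have h1at : 0 < 1 - a * t := by nlinarith
    have hu : 0 < √(1 - t) := sqrt_pos.2 h1t
    have hv : 0 < √(1 - a * t) := sqrt_pos.2 h1at
    have huv : √(1 - t) < √(1 - a * t) := sqrt_lt_sqrt h1t.le (by nlinarith)
    have hD := one_sub_sqrt_one_sub_pos ht0
    have hden : HasDerivAt (fun s => 1 - √(1 - s)) (1 / (2 * √(1 - t))) t := by
      simpa using hasDerivAt_one_sub_sqrt_one_sub_mul (b := 1) (t := t) (by linarith)
    have hderiv := (hasDerivAt_one_sub_sqrt_one_sub_mul h1at).fun_div hden hD.ne'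
    rw [hderiv.deriv]
    have hkey := mul_one_sub_lt_mul_one_sub ha ht0 hu.le huv (sq_sqrt h1t.le) (sq_sqrt h1at.le)
    refine div_neg_of_neg_of_pos ?_ (by positivity)
    rw [div_mul_eq_mul_div, mul_one_div, div_sub_div _ _ (by positivity) (by positivity)]
    refine div_neg_of_neg_of_pos ?_ (by positivity)
    linear_combination 2 * hkey
end

section
/- For fixed a ∈ (0,1), the function t ↦ (1 - √(1 - a t)) / (1 + √(1 - t)) is (strictly) increasing on (0,1]. -/
theorem stmt_2 (a : ℝ) (ha : 0 < a) (ha1 : a < 1) :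
    StrictMonoOn (fun t : ℝ => (1 - Real.sqrt (1 - a * t)) / (1 + Real.sqrt (1 - t)))
      (Set.Ioc 0 1) := by
  rintro x ⟨hx0, hx1⟩ y ⟨hy0, hy1⟩ hxy
  simp only
  have hay : (0:ℝ) ≤ 1 - a * y := by nlinarith
  have hsy : Real.sqrt (1 - a * y) < Real.sqrt (1 - a * x) := by
    apply Real.sqrt_lt_sqrt hay; nlinarith
  have hsx1 : Real.sqrt (1 - a * x) < 1 := by
    have := Real.sqrt_lt_sqrt (by nlinarith : (0:ℝ) ≤ 1 - a * x)
      (by nlinarith : 1 - a * x < 1)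
    simpa using this
  have hNx : 0 < 1 - Real.sqrt (1 - a * x) := by linarith
  have hNxy : 1 - Real.sqrt (1 - a * x) < 1 - Real.sqrt (1 - a * y) := by linarith
  have hDle : Real.sqrt (1 - y) ≤ Real.sqrt (1 - x) :=
    Real.sqrt_le_sqrt (by linarith)
  have hDy : 0 < 1 + Real.sqrt (1 - y) := by positivity
  have hDx : 0 < 1 + Real.sqrt (1 - x) := by positivity
  calc (1 - Real.sqrt (1 - a * x)) / (1 + Real.sqrt (1 - x))
      ≤ (1 - Real.sqrt (1 - a * x)) / (1 + Real.sqrt (1 - y)) := by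
        apply div_le_div_of_nonneg_left hNx.le hDy (by linarith)
    _ < (1 - Real.sqrt (1 - a * y)) / (1 + Real.sqrt (1 - y)) := by
        exact div_lt_div_of_pos_right hNxy hDy
end

section
/- For fixed a ∈ (0,1), the function t ↦ (1 + √(1 - a t)) / (1 + √(1 - t)) is (strictly) increasing on (0,1]. -/
set_option maxHeartbeats 1000000 in
theorem stmt_3 (a : ℝ) (ha : 0 < a) (ha1 : a < 1) :
    StrictMonoOn (fun t : ℝ => (1 + Real.sqrt (1 - a * t)) / (1 + Real.sqrt (1 - t)))
      (Set.Ioc 0 1) := by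
  rintro s ⟨hs0, hs1⟩ t ⟨ht0, ht1⟩ hst
  have hs1' : s < 1 := lt_of_lt_of_le hst ht1
  have has : a * s < 1 := by nlinarith
  have hat : a * t < 1 := by nlinarith
  simp only
  set u := Real.sqrt (1 - a * s) with hu
  set u' := Real.sqrt (1 - a * t) with hu'
  set v := Real.sqrt (1 - s) with hv
  set v' := Real.sqrt (1 - t) with hv'
  have hu2 : u ^ 2 = 1 - a * s := by rw [hu]; exact Real.sq_sqrt (by linarith)
  have hu'2 : u' ^ 2 = 1 - a * t := by rw [hu']; exact Real.sq_sqrt (by linarith)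
  have hv2 : v ^ 2 = 1 - s := by rw [hv]; exact Real.sq_sqrt (by linarith)
  have hv'2 : v' ^ 2 = 1 - t := by rw [hv']; exact Real.sq_sqrt (by linarith)
  have hup : 0 < u := by rw [hu]; exact Real.sqrt_pos.2 (by linarith)
  have hu'p : 0 < u' := by rw [hu']; exact Real.sqrt_pos.2 (by linarith)
  have hvp : 0 < v := by rw [hv]; exact Real.sqrt_pos.2 (by linarith)
  have hv'n : 0 ≤ v' := hv' ▸ Real.sqrt_nonneg _
  have huv : v < u := by
    rw [hu, hv]; exact Real.sqrt_lt_sqrt (by linarith) (by nlinarith)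
  have hu'v' : v' < u' := by
    rw [hu', hv']; exact Real.sqrt_lt_sqrt (by linarith) (by nlinarith)
  clear_value u u' v v'
  clear hu hu' hv hv'
  have h1 : (u - u') * (u + u') = a * (t - s) := by nlinarith
  have h2 : (v - v') * (v + v') = t - s := by nlinarith
  have hP : 0 < (u + u') * (v + v') := by positivity
  have hkey1 : u - u' < v - v' := by
    have hav : a * (v + v') < u + u' := by nlinarith
    have hc : (u - u') * ((u + u') * (v + v')) < (v - v') * ((u + u') * (v + v')) := by
      calc (u - u') * ((u + u') * (v + v')) = a * (t - s) * (v + v') := by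
              rw [← h1]; ring
        _ < (t - s) * (u + u') := by nlinarith
        _ = (v - v') * ((u + u') * (v + v')) := by
              rw [mul_comm (u + u') (v + v'), ← mul_assoc, h2]
    exact lt_of_mul_lt_mul_right hc hP.le
  have h3 : (u' * v) ^ 2 - (u * v') ^ 2 = (t - s) * (1 - a) := by
    linear_combination v ^ 2 * hu'2 + (1 - a * t) * hv2 - v' ^ 2 * hu2 - (1 - a * s) * hv'2
  have hkey2 : u * v' < u' * v := by
    have hsq : (u * v') ^ 2 < (u' * v) ^ 2 := by nlinarith
    exact lt_of_pow_lt_pow_left₀ 2 (mul_pos hu'p hvp).le hsq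
  have hd1 : (0:ℝ) < 1 + v := by linarith
  have hd2 : (0:ℝ) < 1 + v' := by linarith
  rw [div_lt_div_iff₀ hd1 hd2]
  nlinarith [hkey1, hkey2]
end

section
/- Let u, v ∈ (0, 1/4]. Define F(t) = (t² − uv)² / (t(t−u)(t−v)) for t > 0 with t > u and t > v. Then F evaluated at each of the four points (1 ± √(1−4u))(1 ± √(1−4v))/4 equals 1. -/
theorem stmt_5 (u v : ℝ) (hu : 0 < u) (hu4 : u ≤ 1 / 4) (hv : 0 < v) (hv4 : v ≤ 1 / 4)
    (e f : ℝ) (he : e = 1 ∨ e = -1) (hf : f = 1 ∨ f = -1) (t : ℝ)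
    (ht : t = (1 + e * Real.sqrt (1 - 4 * u)) * (1 + f * Real.sqrt (1 - 4 * v)) / 4) :
    (t ^ 2 - u * v) ^ 2 = t * (t - u) * (t - v) := by
  set a := Real.sqrt (1 - 4 * u) with ha'
  set b := Real.sqrt (1 - 4 * v) with hb'
  have ha : a ^ 2 = 1 - 4 * u := Real.sq_sqrt (by linarith)
  have hb : b ^ 2 = 1 - 4 * v := Real.sq_sqrt (by linarith)
  have hu' : u = (1 - a ^ 2) / 4 := by linarith
  have hv' : v = (1 - b ^ 2) / 4 := by linarith
  clear_value a b
  clear ha' hb' hu hu4 hv hv4 ha hb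
  subst ht hu' hv'
  rcases he with rfl | rfl <;> rcases hf with rfl | rfl <;> ring
end

section
/- Let A, B, C be positive reals with A ≥ B, A ≥ C, B ≤ 1/4, C ≤ 1/4, and A ≤ 1. Set t₁(B,C) = max{(1+√(1−4B))(1−√(1−4C))/4, (1−√(1−4B))(1+√(1−4C))/4} and s₁(B,C) = (1+√(1−4B))(1+√(1−4C))/4. Then (A² − BC)² ≤ A(A−B)(A−C) if and only if t₁(B,C) ≤ A ≤ s₁(B,C). -/
set_option maxHeartbeats 2000000


theorem stmt_7 (A B C : ℝ) (hA : 0 < A) (hB : 0 < B) (hC : 0 < C)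
    (hAB : B ≤ A) (hAC : C ≤ A) (hB4 : B ≤ 1 / 4) (hC4 : C ≤ 1 / 4) (hA1 : A ≤ 1) :
    (A ^ 2 - B * C) ^ 2 ≤ A * (A - B) * (A - C) ↔
      max ((1 + Real.sqrt (1 - 4 * B)) * (1 - Real.sqrt (1 - 4 * C)) / 4)
          ((1 - Real.sqrt (1 - 4 * B)) * (1 + Real.sqrt (1 - 4 * C)) / 4) ≤ A ∧
      A ≤ (1 + Real.sqrt (1 - 4 * B)) * (1 + Real.sqrt (1 - 4 * C)) / 4 := by
  have hBnn : (0:ℝ) ≤ 1 - 4 * B := by linarith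
  have hCnn : (0:ℝ) ≤ 1 - 4 * C := by linarith
  set b := Real.sqrt (1 - 4 * B) with hbdef
  set c := Real.sqrt (1 - 4 * C) with hcdef
  have hb0 : 0 ≤ b := Real.sqrt_nonneg _
  have hc0 : 0 ≤ c := Real.sqrt_nonneg _
  have hb2 : b ^ 2 = 1 - 4 * B := Real.sq_sqrt hBnn
  have hc2 : c ^ 2 = 1 - 4 * C := Real.sq_sqrt hCnn
  have hb1 : b < 1 := by nlinarith
  have hc1 : c < 1 := by nlinarith
  have key : (A ^ 2 - B * C) ^ 2 - A * (A - B) * (A - C)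
      = (A - (1 - b) * (1 - c) / 4) * (A - (1 + b) * (1 - c) / 4) *
        (A - (1 - b) * (1 + c) / 4) * (A - (1 + b) * (1 + c) / 4) := by
    have hBe : B = (1 - b ^ 2) / 4 := by linarith
    have hCe : C = (1 - c ^ 2) / 4 := by linarith
    rw [hBe, hCe]; ring
  constructor
  · intro h
    have h4 : A ≤ (1 + b) * (1 + c) / 4 := by
      by_contra hcon
      push_neg at hcon
      have f1 : 0 < A - (1 - b) * (1 - c) / 4 := by nlinarith
      have f2 : 0 < A - (1 + b) * (1 - c) / 4 := by nlinarith
      have f3 : 0 < A - (1 - b) * (1 + c) / 4 := by nlinarith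
      have f4 : 0 < A - (1 + b) * (1 + c) / 4 := by linarith
      have := mul_pos (mul_pos (mul_pos f1 f2) f3) f4
      linarith [key, h, this]
    refine ⟨max_le ?_ ?_, h4⟩
    · -- A ≥ (1+b)(1-c)/4
      rcases le_or_gt b c with hbc | hbc
      · -- (1+b)(1-c) ≤ (1+b)(1-b) = 4B ≤ 4A
        nlinarith [mul_nonneg (by linarith : (0:ℝ) ≤ 1 + b) (by linarith : (0:ℝ) ≤ c - b)]
      · by_contra hcon
        push_neg at hcon
        have hCr : (1 - c) * (1 + c) / 4 = C := by nlinarith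
        have p1 : 0 < (1 - c) * (b + c) := mul_pos (by linarith) (by linarith)
        have p2 : 0 < (1 + c) * (b - c) := mul_pos (by linarith) (by linarith)
        have p3 : 0 ≤ (1 + b) * c := mul_nonneg (by linarith) hc0
        have f1 : 0 < A - (1 - b) * (1 - c) / 4 := by nlinarith [p1, hCr]
        have f2 : 0 < A - (1 - b) * (1 + c) / 4 := by nlinarith [p2, hCr]
        have f3 : A - (1 + b) * (1 - c) / 4 < 0 := by linarith
        have f4 : A - (1 + b) * (1 + c) / 4 < 0 := by nlinarith [p3]
        have := mul_pos (mul_pos f1 f2) (mul_pos_of_neg_of_neg f3 f4)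
        linarith [key, this]
    · -- A ≥ (1-b)(1+c)/4
      rcases le_or_gt c b with hbc | hbc
      · nlinarith [mul_nonneg (by linarith : (0:ℝ) ≤ 1 + c) (by linarith : (0:ℝ) ≤ b - c)]
      · by_contra hcon
        push_neg at hcon
        have hBr : (1 - b) * (1 + b) / 4 = B := by nlinarith
        have p1 : 0 < (1 - b) * (b + c) := mul_pos (by linarith) (by linarith)
        have p2 : 0 < (1 + b) * (c - b) := mul_pos (by linarith) (by linarith)
        have p3 : 0 ≤ (1 + c) * b := mul_nonneg (by linarith) hb0
        have f1 : 0 < A - (1 - b) * (1 - c) / 4 := by nlinarith [p1, hBr]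
        have f2 : 0 < A - (1 + b) * (1 - c) / 4 := by nlinarith [p2, hBr]
        have f3 : A - (1 - b) * (1 + c) / 4 < 0 := by linarith
        have f4 : A - (1 + b) * (1 + c) / 4 < 0 := by nlinarith [p3]
        have := mul_pos (mul_pos f1 f2) (mul_pos_of_neg_of_neg f3 f4)
        linarith [key, this]
  · rintro ⟨h1, h2⟩
    rw [max_le_iff] at h1
    obtain ⟨h1a, h1b⟩ := h1
    have g1 : 0 ≤ A - (1 - b) * (1 - c) / 4 := by
      nlinarith [mul_nonneg hb0 (show (0:ℝ) ≤ 1 - c by linarith)]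
    have g2 : 0 ≤ A - (1 + b) * (1 - c) / 4 := by linarith
    have g3 : 0 ≤ A - (1 - b) * (1 + c) / 4 := by linarith
    have g4 : A - (1 + b) * (1 + c) / 4 ≤ 0 := by linarith
    have := mul_nonpos_of_nonneg_of_nonpos (mul_nonneg (mul_nonneg g1 g2) g3) g4
    linarith [key, this]
end

section
/- Let B, C, Y, Z be reals with 0 < C ≤ B ≤ 1/4 and 0 < Z ≤ Y ≤ 1. Then (1−√(1−4BY))(1+√(1−4CZ)) ≤ (1−√(1−4B))(1+√(1−4C))·(1−√(1−Y))(1+√(1−Z)). -/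
set_option maxHeartbeats 1000000

/-- Key monotonicity lemma: for `0 ≤ α ≤ 1` and `0 ≤ β' ≤ β ≤ 1`,
`(1+√(1-αβ'))(1+√(1-β)) ≤ (1+√(1-αβ))(1+√(1-β'))`. -/
lemma key1 (α β β' : ℝ) (hα0 : 0 ≤ α) (hα1 : α ≤ 1) (hb'0 : 0 ≤ β')
    (hbb : β' ≤ β) (hb1 : β ≤ 1) :
    (1 + Real.sqrt (1 - α * β')) * (1 + Real.sqrt (1 - β)) ≤
      (1 + Real.sqrt (1 - α * β)) * (1 + Real.sqrt (1 - β')) := by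
  have hb0 : 0 ≤ β := le_trans hb'0 hbb
  have hb'1 : β' ≤ 1 := le_trans hbb hb1
  have h1 : 0 ≤ 1 - β := by linarith
  have h2 : 0 ≤ 1 - β' := by linarith
  have h3 : 0 ≤ 1 - α * β := by nlinarith
  have h4 : 0 ≤ 1 - α * β' := by nlinarith
  set s := Real.sqrt (1 - β) with hs_def
  set s' := Real.sqrt (1 - β') with hs'_def
  set S := Real.sqrt (1 - α * β) with hS_def
  set S' := Real.sqrt (1 - α * β') with hS'_def
  have hs2 : s ^ 2 = 1 - β := Real.sq_sqrt h1
  have hs'2 : s' ^ 2 = 1 - β' := Real.sq_sqrt h2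
  have hS2 : S ^ 2 = 1 - α * β := Real.sq_sqrt h3
  have hS'2 : S' ^ 2 = 1 - α * β' := Real.sq_sqrt h4
  have hs0 : 0 ≤ s := Real.sqrt_nonneg _
  have hs'0 : 0 ≤ s' := Real.sqrt_nonneg _
  have hS0 : 0 ≤ S := Real.sqrt_nonneg _
  have hS'0 : 0 ≤ S' := Real.sqrt_nonneg _
  have hsS : s ≤ S := Real.sqrt_le_sqrt (by nlinarith)
  have hs'S' : s' ≤ S' := Real.sqrt_le_sqrt (by nlinarith)
  have hss' : s ≤ s' := Real.sqrt_le_sqrt (by linarith)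
  have hSS' : S ≤ S' := Real.sqrt_le_sqrt (by nlinarith)
  have hAB : (1 + s) * (s + s') ≤ (1 + S) * (S + S') := by nlinarith
  have hdiff : 0 ≤ (1 + S) * (S + S') - α * ((1 + s) * (s + s')) := by
    have hA0 : 0 ≤ (1 + s) * (s + s') := by positivity
    nlinarith [mul_le_of_le_one_left hA0 hα1]
  have hT : 0 ≤ (s' - s) * (1 + S) - (S' - S) * (1 + s) := by
    rcases eq_or_lt_of_le (add_nonneg hs0 hs'0) with h | h
    · -- s + s' = 0, so s = s' = 0, hence β = β' = 1 and S = S'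
      have hs : s = 0 := by linarith
      have hs' : s' = 0 := by linarith
      have hb : β = 1 := by rw [hs] at hs2; nlinarith [hs2]
      have hb' : β' = 1 := by rw [hs'] at hs'2; nlinarith [hs'2]
      have hSeq : S = S' := by rw [hS_def, hS'_def, hb, hb']
      rw [hs, hs', hSeq]; norm_num
    · rcases eq_or_lt_of_le (add_nonneg hS0 hS'0) with h2' | h2'
      · have hS : S = 0 := by linarith
        have hS' : S' = 0 := by linarith
        rw [hS, hS']; nlinarith
      · have heq : ((s' - s) * (1 + S) - (S' - S) * (1 + s)) * ((S + S') * (s + s')) =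
            (β - β') * ((1 + S) * (S + S') - α * ((1 + s) * (s + s'))) := by
          linear_combination ((1 + S) * (S + S')) * hs'2 - ((1 + S) * (S + S')) * hs2 -
            ((1 + s) * (s + s')) * hS'2 + ((1 + s) * (s + s')) * hS2
        have hmul : 0 ≤ ((s' - s) * (1 + S) - (S' - S) * (1 + s)) * ((S + S') * (s + s')) := by
          rw [heq]; exact mul_nonneg (by linarith) hdiff
        have hpos : 0 < (S + S') * (s + s') := mul_pos h2' h
        have h0 : (0 : ℝ) * ((S + S') * (s + s')) ≤
            ((s' - s) * (1 + S) - (S' - S) * (1 + s)) * ((S + S') * (s + s')) := by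
          linarith
        exact le_of_mul_le_mul_right h0 hpos
  nlinarith [hT]

theorem stmt_9 (B C Y Z : ℝ) (hC : 0 < C) (hCB : C ≤ B) (hB4 : B ≤ 1 / 4)
    (hZ : 0 < Z) (hZY : Z ≤ Y) (hY1 : Y ≤ 1) :
    (1 - Real.sqrt (1 - 4 * (B * Y))) * (1 + Real.sqrt (1 - 4 * (C * Z))) ≤
      (1 - Real.sqrt (1 - 4 * B)) * (1 + Real.sqrt (1 - 4 * C)) *
        ((1 - Real.sqrt (1 - Y)) * (1 + Real.sqrt (1 - Z))) := by
  have hB : 0 < B := lt_of_lt_of_le hC hCB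
  have hY : 0 < Y := lt_of_lt_of_le hZ hZY
  have h4B : 0 ≤ 1 - 4 * B := by linarith
  have h4C : 0 ≤ 1 - 4 * C := by linarith
  have hYr : 0 ≤ 1 - Y := by linarith
  have hZr : 0 ≤ 1 - Z := by linarith
  have hBY : 0 ≤ 1 - 4 * (B * Y) := by nlinarith
  have hCZ : 0 ≤ 1 - 4 * (C * Z) := by nlinarith
  have hCY : 0 ≤ 1 - 4 * (C * Y) := by nlinarith
  set a := Real.sqrt (1 - 4 * B) with ha_def
  set c := Real.sqrt (1 - 4 * C) with hc_def
  set y := Real.sqrt (1 - Y) with hy_def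
  set z := Real.sqrt (1 - Z) with hz_def
  set p := Real.sqrt (1 - 4 * (B * Y)) with hp_def
  set q := Real.sqrt (1 - 4 * (C * Z)) with hq_def
  set r := Real.sqrt (1 - 4 * (C * Y)) with hr_def
  have ha2 : a ^ 2 = 1 - 4 * B := Real.sq_sqrt h4B
  have hy2 : y ^ 2 = 1 - Y := Real.sq_sqrt hYr
  have hp2 : p ^ 2 = 1 - 4 * (B * Y) := Real.sq_sqrt hBY
  have ha0 : 0 ≤ a := Real.sqrt_nonneg _
  have hc0 : 0 ≤ c := Real.sqrt_nonneg _
  have hy0 : 0 ≤ y := Real.sqrt_nonneg _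
  have hz0 : 0 ≤ z := Real.sqrt_nonneg _
  have hp0 : 0 ≤ p := Real.sqrt_nonneg _
  have hq0 : 0 ≤ q := Real.sqrt_nonneg _
  have hr0 : 0 ≤ r := Real.sqrt_nonneg _
  -- step 2 : vary Z → Y with C fixed
  have k2 : (1 + q) * (1 + y) ≤ (1 + r) * (1 + z) := by
    have h := key1 (4 * C) Y Z (by linarith) (by linarith) (by linarith) hZY hY1
    rw [show 1 - 4 * C * Z = 1 - 4 * (C * Z) by ring,
        show 1 - 4 * C * Y = 1 - 4 * (C * Y) by ring] at h
    exact h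
  -- step 1 : vary 4B → 4C with Y fixed
  have k1 : (1 + r) * (1 + a) ≤ (1 + p) * (1 + c) := by
    have h := key1 Y (4 * B) (4 * C) (by linarith) hY1 (by linarith) (by linarith) (by linarith)
    rw [show 1 - Y * (4 * C) = 1 - 4 * (C * Y) by ring,
        show 1 - Y * (4 * B) = 1 - 4 * (B * Y) by ring] at h
    exact h
  have key : (1 + q) * ((1 + a) * (1 + y)) ≤ (1 + p) * ((1 + c) * (1 + z)) := by
    calc (1 + q) * ((1 + a) * (1 + y)) = ((1 + q) * (1 + y)) * (1 + a) := by ring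
      _ ≤ ((1 + r) * (1 + z)) * (1 + a) :=
          mul_le_mul_of_nonneg_right k2 (by linarith)
      _ = ((1 + r) * (1 + a)) * (1 + z) := by ring
      _ ≤ ((1 + p) * (1 + c)) * (1 + z) :=
          mul_le_mul_of_nonneg_right k1 (by linarith)
      _ = (1 + p) * ((1 + c) * (1 + z)) := by ring
  have ht : (0 : ℝ) < (1 + p) * ((1 + a) * (1 + y)) := by positivity
  apply le_of_mul_le_mul_right _ ht
  calc (1 - p) * (1 + q) * ((1 + p) * ((1 + a) * (1 + y)))
      = (1 - p ^ 2) * ((1 + q) * ((1 + a) * (1 + y))) := by ring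
    _ = (4 * (B * Y)) * ((1 + q) * ((1 + a) * (1 + y))) := by rw [hp2]; ring
    _ ≤ (4 * (B * Y)) * ((1 + p) * ((1 + c) * (1 + z))) :=
        mul_le_mul_of_nonneg_left key (by positivity)
    _ = ((1 - a ^ 2) * (1 - y ^ 2)) * ((1 + p) * ((1 + c) * (1 + z))) := by
        rw [ha2, hy2]; ring
    _ = (1 - a) * (1 + c) * ((1 - y) * (1 + z)) * ((1 + p) * ((1 + a) * (1 + y))) := by ring
end

section
/- Let B, C, Y, Z be reals with 0 < B ≤ C ≤ 1/4, 0 < Z ≤ Y ≤ 1, and BY ≤ CZ. Then (1+√(1−4BY))(1−√(1−4CZ)) ≤ (1+√(1−4B))(1−√(1−4C))·(1−√(1−Y))(1+√(1−Z)). -/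
lemma sqle {a b : ℝ} (hb : 0 ≤ b) (h : a^2 ≤ b^2) : a ≤ b := by
  nlinarith [sq_nonneg (a - b), sq_nonneg (a + b)]

lemma lemA (b c y t u : ℝ) (hc0 : 0 ≤ c) (hcb : c ≤ b) (hb1 : b ≤ 1)
    (hy0 : 0 ≤ y) (hy1 : y ≤ 1)
    (ht0 : 0 ≤ t) (hu0 : 0 ≤ u)
    (ht : t^2 = b^2 + y^2 - b^2*y^2) (hu : u^2 = c^2 + y^2 - c^2*y^2) :
    (1+t)*(1+c) ≤ (1+b)*(1+u) := by
  have hb0 : 0 ≤ b := le_trans hc0 hcb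
  have hc1 : c ≤ 1 := le_trans hcb hb1
  have hy2 : y^2 ≤ 1 := by nlinarith
  have hb2 : b^2 ≤ 1 := by nlinarith
  have hc2 : c^2 ≤ 1 := by nlinarith
  have htb : b ≤ t := sqle ht0 (by nlinarith [mul_nonneg (mul_nonneg hy0 hy0) (by linarith : (0:ℝ) ≤ 1 - b^2)])
  have huc : c ≤ u := sqle hu0 (by nlinarith [mul_nonneg (mul_nonneg hy0 hy0) (by linarith : (0:ℝ) ≤ 1 - c^2)])
  have hkey : (b+c)*(1+c)*(1-y^2) ≤ (1+u)*(b+u) := by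
    nlinarith [mul_nonneg (by linarith : (0:ℝ) ≤ 1+b)
      (by nlinarith [mul_nonneg (mul_nonneg hy0 hy0) (by linarith : (0:ℝ) ≤ 1+c)] :
        (0:ℝ) ≤ (u-c)+y^2*(1+c))]
  rcases eq_or_lt_of_le (by positivity : (0:ℝ) ≤ t + u) with h0 | hpos
  · have ht' : t = 0 := by linarith
    have hu' : u = 0 := by linarith
    rw [ht', hu']; nlinarith
  · have h1 : (t-u)*(1+c)*(t+u) ≤ ((b-c)*(1+u))*(t+u) := by
      calc (t-u)*(1+c)*(t+u) = (b-c)*((b+c)*(1+c)*(1-y^2)) := by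
            linear_combination (1+c) * (ht - hu)
        _ ≤ (b-c)*((1+u)*(b+u)) :=
            mul_le_mul_of_nonneg_left hkey (by linarith)
        _ ≤ ((b-c)*(1+u))*(t+u) := by nlinarith [mul_nonneg (sub_nonneg.2 hcb) (mul_nonneg (by linarith : (0:ℝ) ≤ 1+u) (sub_nonneg.2 htb))]
    have h2 : (t-u)*(1+c) ≤ (b-c)*(1+u) := le_of_mul_le_mul_right h1 hpos
    nlinarith [h2]

lemma lemB (c y z u s : ℝ) (hc0 : 0 ≤ c) (hc1 : c ≤ 1) (hy0 : 0 ≤ y) (hyz : y ≤ z) (hz1 : z ≤ 1)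
    (hu0 : 0 ≤ u) (hs0 : 0 ≤ s)
    (hu : u^2 = c^2 + y^2 - c^2*y^2) (hs : s^2 = c^2 + z^2 - c^2*z^2) :
    (1+u)*(1-z) ≤ (1+s)*(1-y) := by
  have hy1 : y ≤ 1 := le_trans hyz hz1
  have hsu : u ≤ s := sqle hs0 (by nlinarith [mul_nonneg (mul_nonneg (sub_nonneg.2 hyz) (by linarith : (0:ℝ) ≤ y + z)) (by nlinarith : (0:ℝ) ≤ 1 - c^2)])
  nlinarith [mul_nonneg (sub_nonneg.2 hsu) (by linarith : (0:ℝ) ≤ 1 - y),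
    mul_nonneg (sub_nonneg.2 hyz) (by linarith : (0:ℝ) ≤ 1 + u)]

set_option maxHeartbeats 1000000 in
theorem stmt_11 (B C Y Z : ℝ) (hB : 0 < B) (hBC : B ≤ C) (hC4 : C ≤ 1 / 4)
    (hZ : 0 < Z) (hZY : Z ≤ Y) (hY1 : Y ≤ 1) (hBYCZ : B * Y ≤ C * Z) :
    (1 + Real.sqrt (1 - 4 * (B * Y))) * (1 - Real.sqrt (1 - 4 * (C * Z))) ≤
      (1 + Real.sqrt (1 - 4 * B)) * (1 - Real.sqrt (1 - 4 * C)) *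
        ((1 - Real.sqrt (1 - Y)) * (1 + Real.sqrt (1 - Z))) := by
  have hY0 : 0 < Y := lt_of_lt_of_le hZ hZY
  have hZ1 : Z ≤ 1 := le_trans hZY hY1
  have hC0 : 0 < C := lt_of_lt_of_le hB hBC
  have hB4 : B ≤ 1/4 := le_trans hBC hC4
  have hBY : 0 ≤ 1 - 4*(B*Y) := by
    have := mul_le_of_le_one_right hB.le hY1
    linarith
  have hCZ : 0 ≤ 1 - 4*(C*Z) := by
    have := mul_le_of_le_one_right hC0.le hZ1
    linarith
  set b := Real.sqrt (1 - 4*B) with hbdef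
  set c := Real.sqrt (1 - 4*C) with hcdef
  set y := Real.sqrt (1 - Y) with hydef
  set z := Real.sqrt (1 - Z) with hzdef
  set t := Real.sqrt (1 - 4*(B*Y)) with htdef
  set s := Real.sqrt (1 - 4*(C*Z)) with hsdef
  have hb0 : 0 ≤ b := Real.sqrt_nonneg _
  have hc0 : 0 ≤ c := Real.sqrt_nonneg _
  have hy0 : 0 ≤ y := Real.sqrt_nonneg _
  have hz0 : 0 ≤ z := Real.sqrt_nonneg _
  have ht0 : 0 ≤ t := Real.sqrt_nonneg _
  have hs0 : 0 ≤ s := Real.sqrt_nonneg _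
  have hb2 : b^2 = 1 - 4*B := Real.sq_sqrt (by linarith)
  have hc2 : c^2 = 1 - 4*C := Real.sq_sqrt (by linarith)
  have hy2 : y^2 = 1 - Y := Real.sq_sqrt (by linarith)
  have hz2 : z^2 = 1 - Z := Real.sq_sqrt (by linarith)
  have ht2 : t^2 = 1 - 4*(B*Y) := Real.sq_sqrt hBY
  have hs2 : s^2 = 1 - 4*(C*Z) := Real.sq_sqrt hCZ
  clear_value b c y z t s
  have hc1 : c ≤ 1 := sqle one_pos.le (by rw [hc2]; linarith)
  have hb1 : b ≤ 1 := sqle one_pos.le (by rw [hb2]; linarith)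
  have hz1 : z ≤ 1 := sqle one_pos.le (by rw [hz2]; linarith)
  have hcb : c ≤ b := sqle hb0 (by rw [hb2, hc2]; linarith)
  have hyz : y ≤ z := sqle hz0 (by rw [hy2, hz2]; linarith)
  -- auxiliary u
  have huarg : 0 ≤ c^2 + y^2 - c^2*y^2 := by
    have h1 : c^2 ≤ 1 := by rw [hc2]; linarith
    have h2 : 0 ≤ y^2*(1-c^2) := mul_nonneg (sq_nonneg y) (by linarith)
    linarith [sq_nonneg c, h2]
  obtain ⟨u, hu0, hu2⟩ : ∃ u : ℝ, 0 ≤ u ∧ u^2 = c^2 + y^2 - c^2*y^2 :=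
    ⟨Real.sqrt _, Real.sqrt_nonneg _, Real.sq_sqrt huarg⟩
  have htalg : t^2 = b^2 + y^2 - b^2*y^2 := by rw [ht2, hb2, hy2]; ring
  have hsalg : s^2 = c^2 + z^2 - c^2*z^2 := by rw [hs2, hc2, hz2]; ring
  have hA := lemA b c y t u hc0 hcb hb1 hy0 (le_trans hyz hz1) ht0 hu0 htalg hu2
  have hBl := lemB c y z u s hc0 hc1 hy0 hyz hz1 hu0 hs0 hu2 hsalg
  have hG1 : (1+t)*(1+c)*(1-z) ≤ (1+b)*(1+s)*(1-y) := by
    have hmul : ((1+t)*(1+c)) * ((1+u)*(1-z)) ≤ ((1+b)*(1+u)) * ((1+s)*(1-y)) :=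
      mul_le_mul hA hBl (mul_nonneg (by linarith) (by linarith)) (by positivity)
    have hup : (0:ℝ) < 1 + u := by linarith
    have h' : (1+u)*((1+t)*(1+c)*(1-z)) ≤ (1+u)*((1+b)*(1+s)*(1-y)) := by
      calc (1+u)*((1+t)*(1+c)*(1-z)) = ((1+t)*(1+c))*((1+u)*(1-z)) := by ring
        _ ≤ ((1+b)*(1+u))*((1+s)*(1-y)) := hmul
        _ = (1+u)*((1+b)*(1+s)*(1-y)) := by ring
    exact le_of_mul_le_mul_left h' hup
  have hspos : (0:ℝ) < 1 + s := by linarith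
  have hfin : ((1+t)*(1-s)) * (1+s) ≤ ((1+b)*(1-c)*((1-y)*(1+z))) * (1+s) := by
    calc ((1+t)*(1-s)) * (1+s) = (1+t)*(1-s^2) := by ring
      _ = (1+t)*((1-c^2)*(1-z^2)) := by rw [hsalg]; ring
      _ = ((1+t)*(1+c)*(1-z)) * ((1-c)*(1+z)) := by ring
      _ ≤ ((1+b)*(1+s)*(1-y)) * ((1-c)*(1+z)) := by
          apply mul_le_mul_of_nonneg_right hG1
          exact mul_nonneg (by linarith) (by linarith)
      _ = ((1+b)*(1-c)*((1-y)*(1+z))) * (1+s) := by ring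
  exact le_of_mul_le_mul_right hfin hspos
end

section
/- Let a₀,…,a₄ and b₀,…,b₄ be positive reals, and suppose b₁b₂ ≥ b₀b₃ and b₂b₃ ≥ b₁b₄. If a₁a₂a₃ − a₀a₃² − a₁²a₄ > 0, then (a₁b₁)(a₂b₂)(a₃b₃) − (a₀b₀)(a₃b₃)² − (a₁b₁)²(a₄b₄) > 0. -/
theorem stmt_12 (a₀ a₁ a₂ a₃ a₄ b₀ b₁ b₂ b₃ b₄ : ℝ)
    (ha₀ : 0 < a₀) (ha₁ : 0 < a₁) (ha₂ : 0 < a₂) (ha₃ : 0 < a₃) (ha₄ : 0 < a₄)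
    (hb₀ : 0 < b₀) (hb₁ : 0 < b₁) (hb₂ : 0 < b₂) (hb₃ : 0 < b₃) (hb₄ : 0 < b₄)
    (h1 : b₁ * b₂ ≥ b₀ * b₃) (h2 : b₂ * b₃ ≥ b₁ * b₄)
    (hΔ : a₁ * a₂ * a₃ - a₀ * a₃ ^ 2 - a₁ ^ 2 * a₄ > 0) :
    (a₁ * b₁) * (a₂ * b₂) * (a₃ * b₃) - (a₀ * b₀) * (a₃ * b₃) ^ 2 -
      (a₁ * b₁) ^ 2 * (a₄ * b₄) > 0 := by
  nlinarith [mul_pos (mul_pos hb₁ hb₂) hb₃,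
    mul_le_mul_of_nonneg_right h1 hb₃.le,
    mul_le_mul_of_nonneg_left h2 hb₁.le,
    mul_pos (mul_pos ha₀ ha₃) ha₃,
    mul_pos (mul_pos ha₁ ha₁) ha₄,
    mul_pos (mul_pos (mul_pos hb₁ hb₂) hb₃) hΔ]
end

section
/- Let b₀,…,b₅ be positive reals satisfying b₁b₂ ≥ b₀b₃, b₂b₃ ≥ b₁b₄, and b₃b₄ ≥ b₂b₅, together with 4(b₃b₄ − b₂b₅)(b₁b₂ − b₀b₃) ≥ (b₁b₄ − b₀b₅)². Let a₀,…,a₅ be positive reals with a₃a₄ − a₂a₅ > 0 and (a₃a₄ − a₂a₅)(a₁a₂ − a₀a₃) − (a₁a₄ − a₀a₅)² > 0. Then (a₃b₃)(a₄b₄) − (a₂b₂)(a₅b₅) > 0 and ((a₃b₃)(a₄b₄) − (a₂b₂)(a₅b₅))((a₁b₁)(a₂b₂) − (a₀b₀)(a₃b₃)) − ((a₁b₁)(a₄b₄) − (a₀b₀)(a₅b₅))² > 0. -/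
set_option maxHeartbeats 1000000 in
/-- Core scalar lemma. -/
lemma core_lemma (A B C a b c q x₁ x₂ x₃ x₄ E : ℝ)
    (hA : 0 < A) (hB : 0 < B) (hC : 0 < C) (ha : 0 < a) (hb : 0 < b) (hc : 0 < c) (hq : 0 < q)
    (hx₁ : 0 < x₁) (hx₂ : 0 ≤ x₂) (hx₃ : 0 ≤ x₃) (hx₄ : 0 ≤ x₄)
    (hxx : x₁ * x₄ = x₂ * x₃) (hcq : c * q = a * b)
    (hCq : C * q = A * B + A * b + a * B)
    (hAB : C ^ 2 < A * B) (hE1 : x₁ + x₂ + x₃ + x₄ ≤ E)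
    (hE2 : (x₂ + x₃ + x₄) ^ 2 ≤ 4 * (x₄ * E)) :
    (C * (x₁ + x₂ + x₃ + x₄) + c * (x₂ + x₃ + x₄)) ^ 2
      < (A * B * x₁ + A * (B + b) * x₂ + (A + a) * B * x₃ + (A + a) * (B + b) * x₄) * E := by
  have hTpos : 0 < x₁ + x₂ + x₃ + x₄ := by linarith
  have hKnn : 0 ≤ x₂ + x₃ + x₄ := by linarith
  set r1 := Real.sqrt (A * B) with hr1def
  have hr1nn : 0 ≤ r1 := Real.sqrt_nonneg _
  have hr1sq : r1 ^ 2 = A * B := Real.sq_sqrt (by positivity)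
  have hr1C : C < r1 := by
    nlinarith only [hr1sq, hAB, hC, hr1nn, add_nonneg hr1nn hC.le]
  set r2 := Real.sqrt (a * b) with hr2def
  have hr2nn : 0 ≤ r2 := Real.sqrt_nonneg _
  have hr2sq : r2 ^ 2 = a * b := Real.sq_sqrt (by positivity)
  have hCq2 : C ^ 2 * q ^ 2 = (A * B + A * b + a * B) ^ 2 := by
    have h := congrArg (· ^ 2) hCq
    simpa [mul_pow] using h
  have hq4c : 4 * c < q := by
    nlinarith only [sq_nonneg (A * b - a * B), mul_pos hA hB, sq_nonneg (A * B),
      mul_pos (mul_pos hA hB) hq, mul_pos hq hq, hCq2, hAB, hcq,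
      mul_pos (mul_pos hA hB) (by positivity : (0:ℝ) < A * b + a * B)]
  have hr2c : 2 * c < r2 := by
    nlinarith only [hr2sq, hcq, hc, hr2nn, mul_pos hc (sub_pos.mpr hq4c),
      add_nonneg hr2nn (by linarith : (0:ℝ) ≤ 2 * c)]
  set r4 := Real.sqrt x₄ with hr4def
  have hr4nn : 0 ≤ r4 := Real.sqrt_nonneg _
  have hr4sq : r4 ^ 2 = x₄ := Real.sq_sqrt hx₄
  set r5 := Real.sqrt (x₁ + x₂ + x₃ + x₄) with hr5def
  have hr5nn : 0 ≤ r5 := Real.sqrt_nonneg _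
  have hr5sq : r5 ^ 2 = x₁ + x₂ + x₃ + x₄ := Real.sq_sqrt hTpos.le
  have hr5pos : 0 < r5 := Real.sqrt_pos.mpr hTpos
  have h24 : (x₂ + x₄) * (x₃ + x₄) = x₄ * (x₁ + x₂ + x₃ + x₄) := by linear_combination -hxx
  have hsqprod : (r1 * r2 * (r4 * r5)) ^ 2 = (A * b * (x₂ + x₄)) * (a * B * (x₃ + x₄)) := by
    have h : (r1 * r2 * (r4 * r5)) ^ 2 = r1 ^ 2 * r2 ^ 2 * (r4 ^ 2 * r5 ^ 2) := by ring
    rw [h, hr1sq, hr2sq, hr4sq, hr5sq]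
    linear_combination (A * B * (a * b)) * hxx
  have key1 : 2 * (r1 * r2 * (r4 * r5)) ≤ A * b * (x₂ + x₄) + a * B * (x₃ + x₄) := by
    nlinarith only [sq_nonneg (A * b * (x₂ + x₄) - a * B * (x₃ + x₄)), hsqprod,
      mul_nonneg (mul_nonneg hr1nn hr2nn) (mul_nonneg hr4nn hr5nn),
      mul_nonneg (mul_nonneg hA.le hb.le) (by linarith : (0:ℝ) ≤ x₂ + x₄),
      mul_nonneg (mul_nonneg ha.le hB.le) (by linarith : (0:ℝ) ≤ x₃ + x₄)]
  have keyL : (r1 * r5 + r2 * r4) ^ 2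
      ≤ A * B * x₁ + A * (B + b) * x₂ + (A + a) * B * x₃ + (A + a) * (B + b) * x₄ := by
    have h : (r1 * r5 + r2 * r4) ^ 2
        = r1 ^ 2 * r5 ^ 2 + r2 ^ 2 * r4 ^ 2 + 2 * (r1 * r2 * (r4 * r5)) := by ring
    rw [h, hr1sq, hr2sq, hr4sq, hr5sq]
    linarith only [key1]
  have hLpos : 0 < A * B * x₁ + A * (B + b) * x₂ + (A + a) * B * x₃ + (A + a) * (B + b) * x₄ := by
    have g1 : 0 < A * B * x₁ := by positivity
    have g2 : 0 ≤ A * (B + b) * x₂ := by positivity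
    have g3 : 0 ≤ (A + a) * B * x₃ := by positivity
    have g4 : 0 ≤ (A + a) * (B + b) * x₄ := by positivity
    linarith
  have hZnn : 0 ≤ C * (x₁ + x₂ + x₃ + x₄) + c * (x₂ + x₃ + x₄) := by positivity
  have hr45 : (r4 * r5) ^ 2 = x₄ * (x₁ + x₂ + x₃ + x₄) := by rw [mul_pow, hr4sq, hr5sq]
  rcases le_or_gt ((x₂ + x₃ + x₄) ^ 2) (4 * (x₄ * (x₁ + x₂ + x₃ + x₄))) with hcase | hcase
  · -- Case A
    have hy : (2 * (r4 * r5)) ^ 2 = 4 * (x₄ * (x₁ + x₂ + x₃ + x₄)) := by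
      rw [show (2 * (r4 * r5)) ^ 2 = 4 * (r4 * r5) ^ 2 from by ring, hr45]
    have hKle : x₂ + x₃ + x₄ ≤ 2 * (r4 * r5) := by
      by_contra hng
      push_neg at hng
      have h2 := mul_self_lt_mul_self (by positivity) hng
      rw [← pow_two, ← pow_two] at h2
      linarith only [h2, hy, hcase]
    have hstep : C * (x₁ + x₂ + x₃ + x₄) + c * (x₂ + x₃ + x₄) < (r1 * r5 + r2 * r4) * r5 := by
      have p1 : 0 < (r1 - C) * (x₁ + x₂ + x₃ + x₄) := mul_pos (by linarith) hTpos
      have p2 : 0 ≤ (r2 - 2 * c) * (x₂ + x₃ + x₄) := mul_nonneg (by linarith) hKnn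
      have p3 : 0 ≤ r2 * (2 * (r4 * r5) - (x₂ + x₃ + x₄)) := mul_nonneg hr2nn (by linarith)
      have h : (r1 * r5 + r2 * r4) * r5 = r1 * r5 ^ 2 + r2 * (r4 * r5) := by ring
      rw [h, hr5sq]
      linarith only [p1, p2, p3]
    have hsq : (C * (x₁ + x₂ + x₃ + x₄) + c * (x₂ + x₃ + x₄)) ^ 2
        < ((r1 * r5 + r2 * r4) * r5) ^ 2 := by
      have h := mul_self_lt_mul_self hZnn hstep
      rw [← pow_two, ← pow_two] at h
      exact h
    have heq : ((r1 * r5 + r2 * r4) * r5) ^ 2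
        = (r1 * r5 + r2 * r4) ^ 2 * (x₁ + x₂ + x₃ + x₄) := by
      rw [mul_pow, hr5sq]
    rw [heq] at hsq
    have h1 : (r1 * r5 + r2 * r4) ^ 2 * (x₁ + x₂ + x₃ + x₄)
        ≤ (A * B * x₁ + A * (B + b) * x₂ + (A + a) * B * x₃ + (A + a) * (B + b) * x₄)
          * (x₁ + x₂ + x₃ + x₄) := mul_le_mul_of_nonneg_right keyL hTpos.le
    have h2 : (A * B * x₁ + A * (B + b) * x₂ + (A + a) * B * x₃ + (A + a) * (B + b) * x₄)
          * (x₁ + x₂ + x₃ + x₄)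
        ≤ (A * B * x₁ + A * (B + b) * x₂ + (A + a) * B * x₃ + (A + a) * (B + b) * x₄) * E :=
      mul_le_mul_of_nonneg_left hE1 hLpos.le
    linarith only [hsq, h1, h2]
  · -- Case B
    have hx₄pos : 0 < x₄ := by
      rcases eq_or_lt_of_le hx₄ with h | h
      · exfalso
        rw [← h] at hE2 hcase
        linarith only [hE2, hcase]
      · exact h
    have hr4pos : 0 < r4 := Real.sqrt_pos.mpr hx₄pos
    have hy : (2 * (r4 * r5)) ^ 2 = 4 * (x₄ * (x₁ + x₂ + x₃ + x₄)) := by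
      rw [show (2 * (r4 * r5)) ^ 2 = 4 * (r4 * r5) ^ 2 from by ring, hr45]
    have hK2 : 2 * (r4 * r5) < x₂ + x₃ + x₄ := by
      by_contra hng
      push_neg at hng
      have h2 := mul_self_le_mul_self hKnn hng
      rw [← pow_two, ← pow_two] at h2
      linarith only [h2, hy, hcase]
    have hKpos : 0 < x₂ + x₃ + x₄ :=
      lt_of_le_of_lt (by positivity) hK2
    have hstep : 2 * r4 * (C * (x₁ + x₂ + x₃ + x₄) + c * (x₂ + x₃ + x₄))
        < (r1 * r5 + r2 * r4) * (x₂ + x₃ + x₄) := by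
      have q1 : r1 * r5 * (2 * (r4 * r5)) ≤ r1 * r5 * (x₂ + x₃ + x₄) :=
        mul_le_mul_of_nonneg_left hK2.le (mul_nonneg hr1nn hr5nn)
      have q2 : r1 * r5 * (2 * (r4 * r5)) = 2 * (r1 * r4) * (x₁ + x₂ + x₃ + x₄) := by
        have h : r1 * r5 * (2 * (r4 * r5)) = 2 * (r1 * r4) * r5 ^ 2 := by ring
        rw [h, hr5sq]
      rw [q2] at q1
      have q3 : 2 * (C * r4) * (x₁ + x₂ + x₃ + x₄) < 2 * (r1 * r4) * (x₁ + x₂ + x₃ + x₄) := by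
        have hp : 0 < (r1 - C) * r4 := mul_pos (by linarith) hr4pos
        have hp2 : 0 < ((r1 - C) * r4) * (x₁ + x₂ + x₃ + x₄) := mul_pos hp hTpos
        linarith only [hp2]
      have q4 : 2 * c * (r4 * (x₂ + x₃ + x₄)) < r2 * (r4 * (x₂ + x₃ + x₄)) := by
        have hp : 0 < r4 * (x₂ + x₃ + x₄) := mul_pos hr4pos hKpos
        have hp2 : 0 < (r2 - 2 * c) * (r4 * (x₂ + x₃ + x₄)) := mul_pos (by linarith) hp
        linarith only [hp2]
      linarith only [q1, q3, q4]
    have hsq : (2 * r4 * (C * (x₁ + x₂ + x₃ + x₄) + c * (x₂ + x₃ + x₄))) ^ 2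
        < ((r1 * r5 + r2 * r4) * (x₂ + x₃ + x₄)) ^ 2 := by
      have hlnn : 0 ≤ 2 * r4 * (C * (x₁ + x₂ + x₃ + x₄) + c * (x₂ + x₃ + x₄)) := by positivity
      have h := mul_self_lt_mul_self hlnn hstep
      rw [← pow_two, ← pow_two] at h
      exact h
    have heqL : (2 * r4 * (C * (x₁ + x₂ + x₃ + x₄) + c * (x₂ + x₃ + x₄))) ^ 2
        = 4 * x₄ * (C * (x₁ + x₂ + x₃ + x₄) + c * (x₂ + x₃ + x₄)) ^ 2 := by
      have h : (2 * r4 * (C * (x₁ + x₂ + x₃ + x₄) + c * (x₂ + x₃ + x₄))) ^ 2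
          = 4 * r4 ^ 2 * (C * (x₁ + x₂ + x₃ + x₄) + c * (x₂ + x₃ + x₄)) ^ 2 := by ring
      rw [h, hr4sq]
    rw [heqL] at hsq
    have h1 : ((r1 * r5 + r2 * r4) * (x₂ + x₃ + x₄)) ^ 2
        ≤ (A * B * x₁ + A * (B + b) * x₂ + (A + a) * B * x₃ + (A + a) * (B + b) * x₄)
          * (x₂ + x₃ + x₄) ^ 2 := by
      rw [mul_pow]
      exact mul_le_mul_of_nonneg_right keyL (sq_nonneg _)
    have h2 : (A * B * x₁ + A * (B + b) * x₂ + (A + a) * B * x₃ + (A + a) * (B + b) * x₄)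
          * (x₂ + x₃ + x₄) ^ 2
        ≤ (A * B * x₁ + A * (B + b) * x₂ + (A + a) * B * x₃ + (A + a) * (B + b) * x₄)
          * (4 * (x₄ * E)) := mul_le_mul_of_nonneg_left hE2 hLpos.le
    have h2' : (A * B * x₁ + A * (B + b) * x₂ + (A + a) * B * x₃ + (A + a) * (B + b) * x₄)
          * (x₂ + x₃ + x₄) ^ 2
        ≤ 4 * x₄ * ((A * B * x₁ + A * (B + b) * x₂ + (A + a) * B * x₃ + (A + a) * (B + b) * x₄)
          * E) := by linarith only [h2]
    have hfin : 4 * x₄ * ((C * (x₁ + x₂ + x₃ + x₄) + c * (x₂ + x₃ + x₄)) ^ 2)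
        < 4 * x₄ * ((A * B * x₁ + A * (B + b) * x₂ + (A + a) * B * x₃ + (A + a) * (B + b) * x₄)
          * E) := by linarith only [hsq, h1, h2']
    exact (mul_lt_mul_iff_right₀ (by positivity : (0:ℝ) < 4 * x₄)).mp hfin

theorem stmt_14 (a₀ a₁ a₂ a₃ a₄ a₅ b₀ b₁ b₂ b₃ b₄ b₅ : ℝ)
    (ha₀ : 0 < a₀) (ha₁ : 0 < a₁) (ha₂ : 0 < a₂) (ha₃ : 0 < a₃) (ha₄ : 0 < a₄) (ha₅ : 0 < a₅)
    (hb₀ : 0 < b₀) (hb₁ : 0 < b₁) (hb₂ : 0 < b₂) (hb₃ : 0 < b₃) (hb₄ : 0 < b₄) (hb₅ : 0 < b₅)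
    (h1 : b₁ * b₂ ≥ b₀ * b₃) (h2 : b₂ * b₃ ≥ b₁ * b₄) (h3 : b₃ * b₄ ≥ b₂ * b₅)
    (h4 : 4 * ((b₃ * b₄ - b₂ * b₅) * (b₁ * b₂ - b₀ * b₃)) ≥ (b₁ * b₄ - b₀ * b₅) ^ 2)
    (hΔ2 : a₃ * a₄ - a₂ * a₅ > 0)
    (hΔ4 : (a₃ * a₄ - a₂ * a₅) * (a₁ * a₂ - a₀ * a₃) - (a₁ * a₄ - a₀ * a₅) ^ 2 > 0) :
    (a₃ * b₃) * (a₄ * b₄) - (a₂ * b₂) * (a₅ * b₅) > 0 ∧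
    ((a₃ * b₃) * (a₄ * b₄) - (a₂ * b₂) * (a₅ * b₅)) *
        ((a₁ * b₁) * (a₂ * b₂) - (a₀ * b₀) * (a₃ * b₃)) -
      ((a₁ * b₁) * (a₄ * b₄) - (a₀ * b₀) * (a₅ * b₅)) ^ 2 > 0 := by
  have hB : 0 < a₁ * a₂ - a₀ * a₃ := by
    nlinarith only [sq_nonneg (a₁ * a₄ - a₀ * a₅), hΔ2, hΔ4]
  have hC : 0 < a₁ * a₄ - a₀ * a₅ := by
    nlinarith only [mul_pos ha₂ ha₃, mul_pos (mul_pos ha₀ ha₃) hΔ2,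
      mul_pos (mul_pos ha₂ ha₅) hB, mul_pos hΔ2 hB]
  constructor
  · linarith only [mul_pos (mul_pos hb₂ hb₅) hΔ2,
      mul_nonneg (mul_pos ha₃ ha₄).le (sub_nonneg.mpr h3)]
  · have key := core_lemma (a₃ * a₄ - a₂ * a₅) (a₁ * a₂ - a₀ * a₃) (a₁ * a₄ - a₀ * a₅)
      (a₂ * a₅) (a₀ * a₃) (a₀ * a₅) (a₂ * a₃)
      ((b₂ * b₅) * (b₀ * b₃)) ((b₂ * b₅) * (b₁ * b₂ - b₀ * b₃))
      ((b₀ * b₃) * (b₃ * b₄ - b₂ * b₅)) ((b₃ * b₄ - b₂ * b₅) * (b₁ * b₂ - b₀ * b₃))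
      ((b₂ * b₃) ^ 2)
      hΔ2 hB hC (by positivity) (by positivity) (by positivity) (by positivity)
      (by positivity)
      (mul_nonneg (by positivity) (by linarith))
      (mul_nonneg (by positivity) (by linarith))
      (mul_nonneg (by linarith) (by linarith))
      (by ring) (by ring) (by ring) (by linarith)
      (by nlinarith only [h2, mul_pos hb₂ hb₃])
      (by linarith only [mul_le_mul_of_nonneg_left h4 (sq_nonneg (b₂ * b₃))])
    have hbb : 0 < (b₂ * b₃) ^ 2 := by positivity
    have hid : (((a₃ * b₃) * (a₄ * b₄) - (a₂ * b₂) * (a₅ * b₅)) *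
          ((a₁ * b₁) * (a₂ * b₂) - (a₀ * b₀) * (a₃ * b₃)) -
          ((a₁ * b₁) * (a₄ * b₄) - (a₀ * b₀) * (a₅ * b₅)) ^ 2) * (b₂ * b₃) ^ 2
        = ((a₃ * a₄ - a₂ * a₅) * (a₁ * a₂ - a₀ * a₃) * ((b₂ * b₅) * (b₀ * b₃))
            + (a₃ * a₄ - a₂ * a₅) * ((a₁ * a₂ - a₀ * a₃) + a₀ * a₃) * ((b₂ * b₅) * (b₁ * b₂ - b₀ * b₃))
            + ((a₃ * a₄ - a₂ * a₅) + a₂ * a₅) * (a₁ * a₂ - a₀ * a₃) * ((b₀ * b₃) * (b₃ * b₄ - b₂ * b₅))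
            + ((a₃ * a₄ - a₂ * a₅) + a₂ * a₅) * ((a₁ * a₂ - a₀ * a₃) + a₀ * a₃) *
              ((b₃ * b₄ - b₂ * b₅) * (b₁ * b₂ - b₀ * b₃))) * (b₂ * b₃) ^ 2
          - ((a₁ * a₄ - a₀ * a₅) * ((b₂ * b₅) * (b₀ * b₃) + (b₂ * b₅) * (b₁ * b₂ - b₀ * b₃)
              + (b₀ * b₃) * (b₃ * b₄ - b₂ * b₅) + (b₃ * b₄ - b₂ * b₅) * (b₁ * b₂ - b₀ * b₃))
            + a₀ * a₅ * ((b₂ * b₅) * (b₁ * b₂ - b₀ * b₃) + (b₀ * b₃) * (b₃ * b₄ - b₂ * b₅)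
              + (b₃ * b₄ - b₂ * b₅) * (b₁ * b₂ - b₀ * b₃))) ^ 2 := by ring
    have hpos : 0 < (((a₃ * b₃) * (a₄ * b₄) - (a₂ * b₂) * (a₅ * b₅)) *
          ((a₁ * b₁) * (a₂ * b₂) - (a₀ * b₀) * (a₃ * b₃)) -
          ((a₁ * b₁) * (a₄ * b₄) - (a₀ * b₀) * (a₅ * b₅)) ^ 2) * (b₂ * b₃) ^ 2 := by
      rw [hid]; linarith only [key]
    have h' := div_pos hpos hbb
    rwa [mul_div_cancel_right₀ _ hbb.ne'] at h'
end

section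
/- The polynomial f(x) = 100x⁵ + 230x⁴ + 80x³ + 164x² + 8x + 16 is stable (all zeros have negative real part), the polynomial g(x) = 6.17x⁵ + 6.4x⁴ + 8.96x³ + 6.62x² + 6.4x + 4.66 satisfies bᵢbᵢ₋₁ > bᵢ₋₂bᵢ₊₁ for i = 2,3,4, yet their Hadamard product 617x⁵ + 1472x⁴ + 716.8x³ + 1085.68x² + 51.2x + 74.56 is not stable. -/
/-!
Stability of `f`: at a root `z` of `f`, the identity `lyapunov_identity`, a Lyapunov certificate
for the companion matrix of `f`, reads `2 Re z · S(z) + T(z) = 0` with `S ≥ 0` and `T ≥ 1`,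
hence `Re z < 0`.

Instability of the Hadamard product `h`: if every root `a` of `h` had `Re a ≤ 0`, then
`|-w̄ - a| ≤ |w - a|` for every `w` with `Re w ≥ 0`, hence `|h(-w̄)| ≤ |h(w)|` after factoring `h`
over its roots. This fails at `w = 1/1000 + 7i/25`, which is close to a root of `h` with real part
about `6 · 10⁻⁵`.
-/

open Polynomial Complex ComplexConjugate

lemma norm_neg_conj_sub_le_norm_sub {z a : ℂ} (hz : 0 ≤ z.re) (ha : a.re ≤ 0) :
    ‖-conj z - a‖ ≤ ‖z - a‖ := by
  rw [← sq_le_sq₀ (norm_nonneg _) (norm_nonneg _), ← normSq_eq_norm_sq, ← normSq_eq_norm_sq,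
    normSq_apply, normSq_apply]
  simp only [sub_re, sub_im, neg_re, neg_im, conj_re, conj_im, neg_neg]
  nlinarith [mul_nonpos_of_nonneg_of_nonpos hz ha]

theorem Polynomial.norm_eval_neg_conj_le {p : ℂ[X]} (hp : ∀ a ∈ p.roots, a.re ≤ 0) {z : ℂ}
    (hz : 0 ≤ z.re) : ‖p.eval (-conj z)‖ ≤ ‖p.eval z‖ := by
  have hsplit := IsAlgClosed.splits p
  have hnorm (w : ℂ) : ‖(p.roots.map (w - ·)).prod‖ = (p.roots.map (‖w - ·‖)).prod := by
    simpa [Multiset.map_map, Function.comp_def] using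
      map_multiset_prod (normHom (α := ℂ)) (p.roots.map (w - ·))
  rw [hsplit.eval_eq_prod_roots, hsplit.eval_eq_prod_roots, norm_mul, norm_mul, hnorm, hnorm]
  gcongr
  exact Multiset.prod_map_le_prod_map₀ _ _ (fun _ _ => norm_nonneg _)
    fun a ha => norm_neg_conj_sub_le_norm_sub hz (hp a ha)

theorem Polynomial.exists_mem_roots_re_pos {p : ℂ[X]} {z : ℂ} (hz : 0 ≤ z.re)
    (h : ‖p.eval z‖ < ‖p.eval (-conj z)‖) : ∃ a ∈ p.roots, 0 < a.re := by
  by_contra! hp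
  exact (p.norm_eval_neg_conj_le hp hz).not_gt h

noncomputable def polyF (z : ℂ) : ℂ :=
  100 * z ^ 5 + 230 * z ^ 4 + 80 * z ^ 3 + 164 * z ^ 2 + 8 * z + 16

lemma polyF_conj (z : ℂ) : polyF (conj z) = conj (polyF z) := by
  simp [polyF, map_ofNat]

noncomputable def lyapunovMultiplier (z : ℂ) : ℂ :=
  (25 / 8 + 330669 / 16 * z + 41193 / 4 * z ^ 2 + 1111367 / 32 * z ^ 3 + 241605 / 16 * z ^ 4) / 100

-- With `v = (1, z, …, z⁴)`, `lyapunovT z = v* v` and `lyapunovS z = v* P v`, where `P` is the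
-- solution of the Lyapunov equation of the companion matrix of `polyF` with right-hand side the
-- identity; `lyapunovS` is written through the `LDLᵀ` factorisation of `P`. The multiplier is the
-- last row of `P` divided by the leading coefficient of `polyF`.
noncomputable def lyapunovS (z : ℂ) : ℝ :=
  241605 / 16 * normSq (z ^ 4 + 1111367 / 483210 * z ^ 3 + 18308 / 26845 * z ^ 2 +
      36741 / 26845 * z + 10 / 48321) +
    1723271807 / 966420 * normSq (z ^ 3 + 3960428778 / 1723271807 * z ^ 2 +
      1165100796 / 1723271807 * z + 2334919141 / 1723271807) +
    2785467228833 / 172327180700 * normSq (z ^ 2 + 4034075869106 / 2785467228833 * z +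
      1595649482789 / 5570934457666) +
    529985552294253 / 22283737830664 * normSq (z + 62217052111686 / 176661850764751) +
    82184618800443487 / 2826589612236016

noncomputable def lyapunovT (z : ℂ) : ℝ :=
  1 + normSq z + normSq (z ^ 2) + normSq (z ^ 3) + normSq (z ^ 4)

lemma lyapunovS_nonneg (z : ℂ) : 0 ≤ lyapunovS z := by
  simp only [lyapunovS, normSq_eq_norm_sq]
  positivity

lemma one_le_lyapunovT (z : ℂ) : 1 ≤ lyapunovT z := by
  unfold lyapunovT
  linarith [normSq_nonneg z, normSq_nonneg (z ^ 2), normSq_nonneg (z ^ 3), normSq_nonneg (z ^ 4)]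

lemma lyapunov_identity (z : ℂ) :
    ((2 * z.re * lyapunovS z + lyapunovT z : ℝ) : ℂ) =
      lyapunovMultiplier (conj z) * polyF z + lyapunovMultiplier z * polyF (conj z) := by
  rw [ofReal_add, ofReal_mul, ← add_conj]
  simp only [lyapunovS, lyapunovT, ofReal_add, ofReal_mul, ofReal_div, ofReal_ofNat, ofReal_one,
    ← mul_conj]
  simp only [lyapunovMultiplier, polyF, map_add, map_mul, map_pow, map_div₀, map_ofNat]
  ring

theorem re_neg_of_polyF_eq_zero {z : ℂ} (hz : polyF z = 0) : z.re < 0 := by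
  have hzero : 2 * z.re * lyapunovS z + lyapunovT z = 0 := by
    rw [← ofReal_eq_zero, lyapunov_identity, polyF_conj, hz]
    simp
  nlinarith [lyapunovS_nonneg z, one_le_lyapunovT z]

noncomputable def hadamardPoly : ℂ[X] :=
  C 617 * X ^ 5 + C 1472 * X ^ 4 + C 716.8 * X ^ 3 + C 1085.68 * X ^ 2 + C 51.2 * X + C 74.56

lemma hadamardPoly_eval (z : ℂ) : hadamardPoly.eval z =
    617 * z ^ 5 + 1472 * z ^ 4 + 716.8 * z ^ 3 + 1085.68 * z ^ 2 + 51.2 * z + 74.56 := by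
  simp [hadamardPoly]

lemma norm_hadamardPoly_eval_lt :
    ‖hadamardPoly.eval (1 / 1000 + 7 / 25 * I)‖ <
      ‖hadamardPoly.eval (-conj (1 / 1000 + 7 / 25 * I))‖ := by
  have hmirror : -conj (1 / 1000 + 7 / 25 * I) = -1 / 1000 + 7 / 25 * I := by
    apply Complex.ext <;> norm_num [map_ofNat]
  rw [hmirror, ← sq_lt_sq₀ (norm_nonneg _) (norm_nonneg _), ← normSq_eq_norm_sq,
    ← normSq_eq_norm_sq, hadamardPoly_eval, hadamardPoly_eval, normSq_apply, normSq_apply]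
  simp only [pow_succ, pow_zero, one_mul, add_re, add_im, mul_re, mul_im, div_re, div_im]
  norm_num

theorem exists_mem_roots_hadamardPoly_re_pos : ∃ a ∈ hadamardPoly.roots, 0 < a.re :=
  exists_mem_roots_re_pos (by norm_num) norm_hadamardPoly_eval_lt

theorem stmt_18 :
    (∀ z : ℂ, 100 * z ^ 5 + 230 * z ^ 4 + 80 * z ^ 3 + 164 * z ^ 2 + 8 * z + 16 = 0 →
      z.re < 0) ∧
    ((6.4 : ℝ) * 6.62 > 4.66 * 8.96 ∧ (8.96 : ℝ) * 6.62 > 6.4 * 6.4 ∧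
      (8.96 : ℝ) * 6.4 > 6.62 * 6.17) ∧
    ¬ (∀ z : ℂ, 617 * z ^ 5 + 1472 * z ^ 4 + 716.8 * z ^ 3 + 1085.68 * z ^ 2 +
        51.2 * z + 74.56 = 0 → z.re < 0) := by
  refine ⟨fun _ hz => re_neg_of_polyF_eq_zero hz, by norm_num, fun hstable => ?_⟩
  obtain ⟨a, ha, hre⟩ := exists_mem_roots_hadamardPoly_re_pos
  have hroot := isRoot_of_mem_roots ha
  rw [IsRoot.def, hadamardPoly_eval] at hroot
  exact hre.not_gt (hstable a hroot)
end
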